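/- arXiv:1204.3413 — 2 statements merged into one kernel-verified Lean document; each statement's English description precedes it below -/
import Mathlib

section
/- Let Φ be a k-x-basic read-once Boolean formula, σ an assignment, and v a vertex with κ_v ≡ ∨ (disjunction) such that σ is ε-far from the set of assignments making Φ_v evaluate to 1. Then: (1) every child u of v satisfies |Φ_u| ≥ ε|Φ_v|; (2) every child u satisfies that σ is ε/(1−ε)-far from making Φ_u evaluate to 1 (in relative terms of Φ_u); (3) ε ≤ 1/2; and (4) for every child u other than the heaviest child, σ is 2ε-far from making Φ_u evaluate to 1. -/
/-- Read-once formula trees over variable set `X`: leaves are variables (possibly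
negated), internal nodes are `∧`/`∨` gates of unbounded arity or general Boolean
gates given by a function on the list of children values. -/
inductive Fla (X : Type) where
  | leaf : X → Fla X
  | neg : X → Fla X
  | and : List (Fla X) → Fla X
  | or : List (Fla X) → Fla X
  | gate : (List Bool → Bool) → List (Fla X) → Fla X

namespace Fla
variable {X : Type}

/-- Evaluation of a formula under an assignment. -/
def eval (σ : X → Bool) : Fla X → Bool
  | leaf x => σ x
  | neg x => !σ x
  | and l => l.attach.all (fun ⟨φ, _⟩ => eval σ φ)
  | or l => l.attach.any (fun ⟨φ, _⟩ => eval σ φ)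
  | gate f l => f (l.attach.map (fun ⟨φ, _⟩ => eval σ φ))

/-- The list of variables occurring in a formula (with multiplicity). -/
def vars : Fla X → List X
  | leaf x => [x]
  | neg x => [x]
  | and l => l.attach.flatMap (fun ⟨φ, _⟩ => vars φ)
  | or l => l.attach.flatMap (fun ⟨φ, _⟩ => vars φ)
  | gate _ l => l.attach.flatMap (fun ⟨φ, _⟩ => vars φ)

/-- The size `|Φ|` of a formula: the number of (occurrences of) variables. -/
def size (φ : Fla X) : ℕ := (vars φ).length

/-- A formula is read-once when no variable occurs twice. -/
def ReadOnce (φ : Fla X) : Prop := (vars φ).Nodup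

/-- Relative Hamming distance between two assignments, measured over the
variables of `φ`. -/
noncomputable def hamming (φ : Fla X) (σ σ' : X → Bool) : ℝ :=
  ((vars φ).countP (fun x => σ x != σ' x) : ℝ) / (size φ : ℝ)

/-- `σ` is `ε`-far from making `φ` evaluate to `b`. -/
def EpsFar (φ : Fla X) (b : Bool) (σ : X → Bool) (ε : ℝ) : Prop :=
  ∀ σ', eval σ' φ = b → ε ≤ hamming φ σ σ'

/-- `σ` is `ε`-close to making `φ` evaluate to `b`. -/
def EpsClose (φ : Fla X) (b : Bool) (σ : X → Bool) (ε : ℝ) : Prop :=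
  ∃ σ', eval σ' φ = b ∧ hamming φ σ σ' ≤ ε

/-- The children of the root. -/
def children : Fla X → List (Fla X)
  | and l => l
  | or l => l
  | gate _ l => l
  | _ => []

def isAnd : Fla X → Prop
  | and _ => True
  | _ => False

def isOr : Fla X → Prop
  | or _ => True
  | _ => False

/-- The `i`-th input of the `n`-ary gate `f` is `(a,b)`-forceful. -/
def Forceful (f : List Bool → Bool) (n i : ℕ) : Prop :=
  ∃ a b : Bool, ∀ l : List Bool, l.length = n → l[i]? = some a → f l = b

/-- An `n`-ary gate is unforceable if no input is forceful. -/
def Unforceable (f : List Bool → Bool) (n : ℕ) : Prop :=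
  ∀ i < n, ¬ Forceful f n i

/-- `k`-`x`-basic formulas. -/
inductive KxBasic (k : ℕ) : Fla X → Prop where
  | leaf (x : X) : KxBasic k (.leaf x)
  | neg (x : X) : KxBasic k (.neg x)
  | and (l : List (Fla X)) : 2 ≤ l.length → (∀ φ ∈ l, KxBasic k φ) →
      (∀ φ ∈ l, ¬ isAnd φ) → KxBasic k (.and l)
  | or (l : List (Fla X)) : 2 ≤ l.length → (∀ φ ∈ l, KxBasic k φ) →
      (∀ φ ∈ l, ¬ isOr φ) → KxBasic k (.or l)
  | gate (f : List Bool → Bool) (l : List (Fla X)) : 2 ≤ l.length → l.length ≤ k →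
      Unforceable f l.length → (∀ φ ∈ l, KxBasic k φ) → KxBasic k (.gate f l)

/-- Basic formulas: only `∧`/`∨` gates, alternating, negations at leaves. -/
inductive BasicF : Fla X → Prop where
  | leaf (x : X) : BasicF (.leaf x)
  | neg (x : X) : BasicF (.neg x)
  | and (l : List (Fla X)) : 2 ≤ l.length → (∀ φ ∈ l, BasicF φ) →
      (∀ φ ∈ l, ¬ isAnd φ) → BasicF (.and l)
  | or (l : List (Fla X)) : 2 ≤ l.length → (∀ φ ∈ l, BasicF φ) →
      (∀ φ ∈ l, ¬ isOr φ) → BasicF (.or l)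

end Fla

/-!
Let `u` be a child of the `∨`-vertex and `σ'` an assignment satisfying `Φ_u`. Overwriting `σ`
by `σ'` on the variables of `u` alone already satisfies `Φ_v`, and by read-onceness it changes
exactly the variables of `u` on which `σ` and `σ'` differ; so there are at least `ε|Φ_v|` of them.
Since a `k`-`x`-basic read-once formula is satisfiable (an unforceable gate is not constant),
`|Φ_u| ≥ ε|Φ_v|`. Two children have disjoint variables, hence `2ε|Φ_v| ≤ |Φ_v|` and
`|Φ_u| ≤ (1-ε)|Φ_v|`, while a child lighter than the heaviest one has `|Φ_u| ≤ |Φ_v|/2`;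
dividing `ε|Φ_v|` by these bounds on `|Φ_u|` gives the relative distances `ε/(1-ε)` and `2ε`.
-/

namespace List
variable {α β : Type*} {f : α → List β} {l : List α}

lemma nodup_of_nodup_flatMap (hf : ∀ a ∈ l, f a ≠ []) (h : (l.flatMap f).Nodup) : l.Nodup :=
  (nodup_flatMap.1 h).2.imp_of_mem fun {a _} ha _ hab heq => by
    obtain ⟨x, hx⟩ := exists_mem_of_ne_nil _ (hf a ha)
    exact hab hx (heq ▸ hx)

lemma length_add_length_le_of_nodup_flatMap (h : (l.flatMap f).Nodup) {a b : α} (ha : a ∈ l)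
    (hb : b ∈ l) (hab : a ≠ b) : (f a).length + (f b).length ≤ (l.flatMap f).length := by
  obtain ⟨hnodup, hdisj⟩ := nodup_flatMap.1 h
  have : Std.Symm (Function.onFun List.Disjoint f) := ⟨fun _ _ h => h.symm⟩
  rw [← length_append]
  refine (nodup_append.2 ⟨hnodup a ha, hnodup b hb, ?_⟩).length_le_of_subset ?_
  · exact fun x hxa y hyb hxy => hdisj.forall ha hb hab hxa (hxy ▸ hyb)
  · exact fun x hx => (mem_append.1 hx).elim (mem_flatMap_of_mem ha) (mem_flatMap_of_mem hb)

end List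

namespace Fla
variable {X : Type}

@[simp] lemma eval_and (σ : X → Bool) (l : List (Fla X)) : eval σ (.and l) = l.all (eval σ) := by
  simp [eval]

@[simp] lemma eval_or (σ : X → Bool) (l : List (Fla X)) : eval σ (.or l) = l.any (eval σ) := by
  simp [eval]

@[simp] lemma eval_gate (σ : X → Bool) (f : List Bool → Bool) (l : List (Fla X)) :
    eval σ (.gate f l) = f (l.map (eval σ)) := by
  simp [eval]

@[simp] lemma vars_and (l : List (Fla X)) : vars (.and l) = l.flatMap vars := by simp [vars]

@[simp] lemma vars_or (l : List (Fla X)) : vars (.or l) = l.flatMap vars := by simp [vars]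

@[simp] lemma vars_gate (f : List Bool → Bool) (l : List (Fla X)) :
    vars (.gate f l) = l.flatMap vars := by
  simp [vars]

theorem eval_congr {σ σ' : X → Bool} :
    ∀ φ : Fla X, (∀ x ∈ vars φ, σ x = σ' x) → eval σ φ = eval σ' φ
  | .leaf x, h => by simpa [eval, vars] using h
  | .neg x, h => by simpa [eval, vars] using h
  | .and l, h => by
      simp only [eval]
      exact List.all_congr rfl fun ⟨ψ, hψ⟩ => eval_congr ψ fun x hx =>
        h x (by simpa using List.mem_flatMap_of_mem hψ hx)
  | .or l, h => by
      simp only [eval]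
      exact List.any_congr rfl fun ⟨ψ, hψ⟩ => eval_congr ψ fun x hx =>
        h x (by simpa using List.mem_flatMap_of_mem hψ hx)
  | .gate f l, h => by
      simp only [eval]
      exact congrArg f <| List.map_congr_left fun ⟨ψ, hψ⟩ _ => eval_congr ψ fun x hx =>
        h x (by simpa using List.mem_flatMap_of_mem hψ hx)

noncomputable def overrideOn (φ : Fla X) (σ' σ : X → Bool) : X → Bool :=
  open Classical in fun x => if x ∈ vars φ then σ' x else σ x

lemma eval_overrideOn_self (φ : Fla X) (σ' σ : X → Bool) :
    eval (overrideOn φ σ' σ) φ = eval σ' φ :=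
  eval_congr φ fun _ hx => if_pos hx

lemma eval_overrideOn_of_disjoint {φ ψ : Fla X} (h : (vars φ).Disjoint (vars ψ)) (σ' σ : X → Bool) :
    eval (overrideOn φ σ' σ) ψ = eval σ ψ :=
  eval_congr ψ fun _ hx => if_neg fun hφ => h hφ hx

lemma countP_ne_overrideOn_le {s : List X} (hs : s.Nodup) (φ : Fla X) (σ' σ : X → Bool) :
    s.countP (fun x => σ x != overrideOn φ σ' σ x) ≤ (vars φ).countP (fun x => σ x != σ' x) := by
  rw [List.countP_eq_length_filter, List.countP_eq_length_filter]
  refine (hs.filter _).length_le_of_subset fun x hx => ?_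
  by_cases hφ : x ∈ vars φ <;> simp_all [overrideOn]

lemma Unforceable.exists_apply_eq {f : List Bool → Bool} {n : ℕ} (hf : Unforceable f n)
    (hn : 0 < n) (b : Bool) : ∃ v : List Bool, v.length = n ∧ f v = b := by
  by_contra! h
  exact hf 0 hn ⟨true, !b, fun v hv _ => Bool.eq_not_iff.2 (h v hv)⟩

lemma exists_map_eval_eq {l : List (Fla X)}
    (hsat : ∀ φ ∈ l, φ.ReadOnce → ∀ b, ∃ σ, eval σ φ = b)
    (hro : (l.flatMap vars).Nodup) (t : List Bool) (ht : t.length = l.length) :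
    ∃ σ, l.map (eval σ) = t := by
  induction l generalizing t with
  | nil => exact ⟨fun _ => true, by simp_all⟩
  | cons φ l ih =>
    obtain ⟨b, t, rfl⟩ := List.exists_cons_of_length_eq_add_one ht
    rw [List.flatMap_cons] at hro
    obtain ⟨hφ, hl, -⟩ := List.nodup_append.1 hro
    obtain ⟨σ₁, hσ₁⟩ := hsat φ (by simp) hφ b
    obtain ⟨σ₂, hσ₂⟩ := ih (fun ψ hψ => hsat ψ (by simp [hψ])) hl t (by simpa using ht)
    refine ⟨overrideOn φ σ₁ σ₂, ?_⟩
    rw [List.map_cons, eval_overrideOn_self, hσ₁, ← hσ₂]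
    congr 1
    refine List.map_congr_left fun ψ hψ => eval_overrideOn_of_disjoint ?_ σ₁ σ₂
    exact fun _ hx hψx => List.disjoint_of_nodup_append hro hx (List.mem_flatMap_of_mem hψ hψx)

lemma exists_eval_eq {k : ℕ} {φ : Fla X} (hφ : KxBasic k φ) (hro : φ.ReadOnce) (b : Bool) :
    ∃ σ, eval σ φ = b := by
  induction hφ generalizing b with
  | leaf x => exact ⟨fun _ => b, by simp [eval]⟩
  | neg x => exact ⟨fun _ => !b, by simp [eval]⟩
  | and l hlen _ _ ih =>
    obtain ⟨σ, hσ⟩ := exists_map_eval_eq ih (by simpa [ReadOnce] using hro)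
      (List.replicate l.length b) (by simp)
    exact ⟨σ, by simpa [List.all_map, List.all_replicate, show l.length ≠ 0 by omega]
      using congrArg (List.all · id) hσ⟩
  | or l hlen _ _ ih =>
    obtain ⟨σ, hσ⟩ := exists_map_eval_eq ih (by simpa [ReadOnce] using hro)
      (List.replicate l.length b) (by simp)
    exact ⟨σ, by simpa [List.any_map, List.any_replicate, show l.length ≠ 0 by omega]
      using congrArg (List.any · id) hσ⟩
  | gate f l hlen _ hf _ ih =>
    obtain ⟨v, hvlen, hv⟩ := hf.exists_apply_eq (by omega) b
    obtain ⟨σ, hσ⟩ := exists_map_eval_eq ih (by simpa [ReadOnce] using hro) v hvlen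
    exact ⟨σ, by rw [eval_gate, hσ, hv]⟩

lemma KxBasic.vars_ne_nil {k : ℕ} {φ : Fla X} (hφ : KxBasic k φ) : vars φ ≠ [] := by
  have flatMap_ne_nil {l : List (Fla X)} (hlen : 2 ≤ l.length) (ih : ∀ ψ ∈ l, vars ψ ≠ []) :
      l.flatMap vars ≠ [] := by
    obtain ⟨ψ, hψ⟩ := List.exists_mem_of_length_pos (by omega : 0 < l.length)
    simpa [List.flatMap_eq_nil_iff] using ⟨ψ, hψ, ih ψ hψ⟩
  induction hφ with
  | leaf x => simp [vars]
  | neg x => simp [vars]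
  | and l hlen _ _ ih => simpa using flatMap_ne_nil hlen ih
  | or l hlen _ _ ih => simpa using flatMap_ne_nil hlen ih
  | gate f l hlen _ _ _ ih => simpa using flatMap_ne_nil hlen ih

lemma KxBasic.size_pos {k : ℕ} {φ : Fla X} (hφ : KxBasic k φ) : 0 < size φ :=
  List.length_pos_iff.2 hφ.vars_ne_nil

section OrVertex

variable {k : ℕ} {l : List (Fla X)} {σ : X → Bool} {ε : ℝ} {u : Fla X}

lemma KxBasic.two_le_length_of_or (h : KxBasic k (.or l)) : 2 ≤ l.length := by
  cases h; assumption

lemma KxBasic.of_mem_or (h : KxBasic k (.or l)) (hu : u ∈ l) : KxBasic k u := by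
  cases h with | or _ _ hch _ => exact hch u hu

lemma ReadOnce.of_mem_or (h : (Fla.or l).ReadOnce) (hu : u ∈ l) : u.ReadOnce :=
  (List.nodup_flatMap.1 (by simpa [ReadOnce] using h)).1 u hu

lemma size_add_size_le_of_or (h : (Fla.or l).ReadOnce) {w : Fla X} (hu : u ∈ l) (hw : w ∈ l)
    (huw : u ≠ w) : size u + size w ≤ size (.or l) := by
  simpa [size] using
    List.length_add_length_le_of_nodup_flatMap (by simpa [ReadOnce] using h) hu hw huw

lemma exists_mem_ne_of_or (hbasic : KxBasic k (.or l)) (hro : (Fla.or l).ReadOnce) (u : Fla X) :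
    ∃ w ∈ l, w ≠ u := by
  classical
  have hnodup : l.Nodup := List.nodup_of_nodup_flatMap
    (fun ψ hψ => (hbasic.of_mem_or hψ).vars_ne_nil) (by simpa [ReadOnce] using hro)
  have hcard : 1 < l.toFinset.card := by
    rw [List.toFinset_card_of_nodup hnodup]; exact hbasic.two_le_length_of_or
  simpa using Finset.exists_mem_ne hcard u

lemma mul_size_le_countP_of_epsFar_or (hro : (Fla.or l).ReadOnce)
    (hfar : EpsFar (.or l) true σ ε) (hu : u ∈ l) {σ' : X → Bool} (hσ' : eval σ' u = true) :
    ε * size (.or l) ≤ (vars u).countP (fun x => σ x != σ' x) := by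
  have hsat : eval (overrideOn u σ' σ) (.or l) = true := by
    rw [eval_or, List.any_eq_true]
    exact ⟨u, hu, by rw [eval_overrideOn_self, hσ']⟩
  calc ε * size (.or l)
      ≤ (vars (.or l)).countP (fun x => σ x != overrideOn u σ' σ x) :=
        mul_le_of_le_div₀ (by positivity) (by positivity) (hfar _ hsat)
    _ ≤ (vars u).countP (fun x => σ x != σ' x) := by
        exact_mod_cast countP_ne_overrideOn_le hro u σ' σ

lemma mul_size_le_size_of_epsFar_or (hbasic : KxBasic k (.or l)) (hro : (Fla.or l).ReadOnce)
    (hfar : EpsFar (.or l) true σ ε) (hu : u ∈ l) : ε * size (.or l) ≤ size u := by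
  obtain ⟨σ', hσ'⟩ := exists_eval_eq (hbasic.of_mem_or hu) (hro.of_mem_or hu) true
  exact (mul_size_le_countP_of_epsFar_or hro hfar hu hσ').trans
    (by exact_mod_cast List.countP_le_length)

lemma epsFar_of_mem_or_of_mul_size_le (hbasic : KxBasic k (.or l)) (hro : (Fla.or l).ReadOnce)
    (hfar : EpsFar (.or l) true σ ε) (hu : u ∈ l) {δ : ℝ}
    (hδ : δ * size u ≤ ε * size (.or l)) : EpsFar u true σ δ := fun σ' hσ' => by
  rw [hamming, le_div_iff₀ (by exact_mod_cast (hbasic.of_mem_or hu).size_pos)]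
  exact hδ.trans (mul_size_le_countP_of_epsFar_or hro hfar hu hσ')

end OrVertex

end Fla

open Fla in
/-- Observation about `∨` vertices in `k`-`x`-basic formulas:
if `σ` is `ε`-far from making an `∨`-rooted subformula of a `k`-`x`-basic
read-once formula evaluate to `1`, then every child has size at least `ε|Φ_v|`,
every child is `ε/(1-ε)`-far from evaluating to `1`, `ε ≤ 1/2`, and every child
other than the heaviest one is `2ε`-far from evaluating to `1`. -/
theorem or_vertex_far_children {X : Type} (k : ℕ) (l : List (Fla X))
    (Φv : Fla X) (hΦ : Φv = Fla.or l) (hbasic : KxBasic k Φv) (hro : Φv.ReadOnce)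
    (σ : X → Bool) (ε : ℝ) (hε : 0 < ε) (hfar : EpsFar Φv true σ ε) :
    (∀ u ∈ l, ε * (size Φv : ℝ) ≤ (size u : ℝ)) ∧
    (∀ u ∈ l, EpsFar u true σ (ε / (1 - ε))) ∧
    ε ≤ 1 / 2 ∧
    ∀ lc ∈ l, (∀ w ∈ l, size w ≤ size lc) →
      ∀ u ∈ l, u ≠ lc → EpsFar u true σ (2 * ε) := by
  subst hΦ
  have hsize (u : Fla X) (hu : u ∈ l) := mul_size_le_size_of_epsFar_or hbasic hro hfar hu
  have hsum {u w} (hu : u ∈ l) (hw : w ∈ l) (huw : u ≠ w) :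
      (size u : ℝ) + size w ≤ size (.or l) := by
    exact_mod_cast size_add_size_le_of_or hro hu hw huw
  have hN : (0 : ℝ) < size (.or l) := by exact_mod_cast hbasic.size_pos
  have hhalf : ε ≤ 1 / 2 := by
    obtain ⟨u, hu⟩ := List.exists_mem_of_length_pos (by linarith [hbasic.two_le_length_of_or])
    obtain ⟨w, hw, hwu⟩ := exists_mem_ne_of_or hbasic hro u
    nlinarith [hsize u hu, hsize w hw, hsum hu hw hwu.symm]
  refine ⟨hsize, fun u hu => ?_, hhalf, fun lc hlc hheavy u hu hne => ?_⟩
  · obtain ⟨w, hw, hwu⟩ := exists_mem_ne_of_or hbasic hro u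
    refine epsFar_of_mem_or_of_mul_size_le hbasic hro hfar hu ?_
    rw [div_mul_eq_mul_div, div_le_iff₀ (by linarith)]
    nlinarith [hsize w hw, hsum hu hw hwu.symm]
  · refine epsFar_of_mem_or_of_mul_size_le hbasic hro hfar hu ?_
    have : (size u : ℝ) ≤ size lc := by exact_mod_cast hheavy u hu
    nlinarith [hsum hu hlc hne]
end

section
/- Let Φ be a read-once Boolean formula, v a vertex, σ an assignment with σ(Φ_v) = 0, and T the set of 'special relatives' of v: all vertices u that are not ancestors of v nor v itself, but are children of some ancestor w of v with κ_w ≡ ∨. If σ(Φ_u) = 0 for every u ∈ T, then σ(Φ) = 0. -/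
namespace Fla
variable {X : Type}

/-- The vertex of the formula tree reached by following the path `p` of child
indices from the root, if it exists, given as the subformula rooted there. -/
def subAt : Fla X → List ℕ → Option (Fla X)
  | φ, [] => some φ
  | φ, i :: p =>
    match (children φ)[i]? with
    | some c => subAt c p
    | none => none

end Fla

open Fla in
/-- if the subformula at a vertex `v` evaluates to `0` under
`σ`, and every "special relative" of `v` (a non-ancestor child of an
`∨`-labelled ancestor of `v`) also evaluates to `0`, then the whole basic
formula evaluates to `0`. -/
theorem special_relatives_witness {X : Type} (Φ : Fla X) (hb : BasicF Φ)
    (σ : X → Bool) (p : List ℕ) (φv : Fla X)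
    (hv : subAt Φ p = some φv) (h0 : eval σ φv = false)
    (hT : ∀ (q : List ℕ) (i j : ℕ) (rest : List ℕ), p = q ++ i :: rest →
      (∃ l, subAt Φ q = some (Fla.or l)) → j ≠ i →
      ∀ ψ, subAt Φ (q ++ [j]) = some ψ → eval σ ψ = false) :
    eval σ Φ = false := by
  induction p generalizing Φ with
  | nil =>
    simp only [subAt, Option.some_inj] at hv
    subst hv; exact h0
  | cons i rest ih =>
    cases hb with
    | leaf x => simp [subAt, children] at hv
    | neg x => simp [subAt, children] at hv
    | and l hlen hbl hna =>
      simp only [subAt, children] at hv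
      cases hc : l[i]? with
      | none => rw [hc] at hv; simp at hv
      | some c =>
        rw [hc] at hv
        have hmem : c ∈ l := by
          obtain ⟨hlt, rfl⟩ := List.getElem?_eq_some_iff.mp hc
          exact List.getElem_mem hlt
        have hcfalse : eval σ c = false := by
          refine ih c (hbl c hmem) hv ?_
          intro q i' j rest' hq hor hj ψ hψ
          refine hT (i :: q) i' j rest' (by simp [hq]) ?_ hj ψ ?_
          · obtain ⟨l', hl'⟩ := hor
            exact ⟨l', by simp [subAt, children, hc, hl']⟩
          · simpa [subAt, children, hc] using hψ
        simp only [eval, List.all_eq_false]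
        exact ⟨⟨c, hmem⟩, List.mem_attach _ _, by simpa using hcfalse⟩
    | or l hlen hbl hno =>
      simp only [subAt, children] at hv
      cases hc : l[i]? with
      | none => rw [hc] at hv; simp at hv
      | some c =>
        rw [hc] at hv
        have hall : ∀ φ ∈ l, eval σ φ = false := by
          intro φ hφ
          obtain ⟨j, hjlt, hj⟩ := List.mem_iff_getElem.mp hφ
          by_cases hji : j = i
          · subst hji
            have hcφ : φ = c := by
              rw [List.getElem?_eq_getElem hjlt, hj] at hc
              exact Option.some_inj.mp hc
            subst hcφ
            refine ih φ (hbl φ hφ) hv ?_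
            intro q i' j' rest' hq hor hj' ψ hψ
            refine hT (j :: q) i' j' rest' (by simp [hq]) ?_ hj' ψ ?_
            · obtain ⟨l', hl'⟩ := hor
              exact ⟨l', by simp [subAt, children, List.getElem?_eq_getElem hjlt, hj, hl']⟩
            · simpa [subAt, children, List.getElem?_eq_getElem hjlt, hj] using hψ
          · refine hT [] i j rest rfl ⟨l, rfl⟩ hji φ ?_
            simp [subAt, children, List.getElem?_eq_getElem hjlt, hj]
        simp only [eval, List.any_eq_false]
        intro x hx
        obtain ⟨φ, hφ⟩ := x
        simpa using hall φ hφ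
end
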